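/- Let A ⊆ Ω^n with μ(A) = α ≥ 1/n. Then the set of w ∈ Ω^n that lie in at least αn/8 of the sets s^j(A) × Ω^j (j = 0,…,n−1) has measure at least 1/2. -/

import Mathlib

/-- Uniform measure (density) of a set of words of length `n` over alphabet `Ω`. -/
noncomputable def meas {Ω : Type*} [Fintype Ω] {n : ℕ} (S : Set (Fin n → Ω)) : ℝ :=
  (Nat.card S : ℝ) / (Fintype.card Ω : ℝ) ^ n

/-- `covers A j` is the set `s^j(A) × Ω^j ⊆ Ω^n`. -/
def covers {Ω : Type*} {n : ℕ} (A : Set (Fin n → Ω)) (j : ℕ) : Set (Fin n → Ω) :=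
  {w | ∃ a ∈ A, ∀ i : Fin n, ∀ h : (i : ℕ) + j < n, w i = a ⟨(i : ℕ) + j, h⟩}

/-- `Uset A = Ω^n \ ⋃_{j=0}^{n-1} s^j(A) × Ω^j`. -/
def Uset {Ω : Type*} {n : ℕ} (A : Set (Fin n → Ω)) : Set (Fin n → Ω) :=
  {u | ∀ j < n, u ∉ covers A j}

/-!
Read a uniformly random word `z` of length `2n` cyclically and mark the positions `p` at which it
shows a word of `A` followed by a word `u` with `f(u) ≤ t`. A word of `A` shown at one of the `n`
positions after `p` overlaps `u` with shift `j < n`, so `u ∈ s^j(A) × Ω^j`; hence every marked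
position is followed within distance `n` by at most `t` others, and on a cycle of length `2n` this
allows at most `2t + 1` marked positions. The two windows at `p` and `p + n` are independent and
uniform, so averaging over `z` and `p` gives `2n · μ(A) · μ(f ≤ t) ≤ 2t + 1`; for `t = ⌊αn/8⌋`
the right side is at most `αn`.
-/

open Finset

section

variable {Ω : Type*} {n : ℕ}

/-- The function `f` of the paper. -/
noncomputable def coverCount (A : Set (Fin n → Ω)) (w : Fin n → Ω) : ℕ :=
  Nat.card {j : ℕ | j < n ∧ w ∈ covers A j}

theorem card_le_of_card_filter_val_mem_Icc_le {N t : ℕ} [NeZero N] (hN : N ≤ 2 * n)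
    (G : Finset (ZMod N)) (hG : ∀ p ∈ G, #{k ∈ G | (k - p).val ∈ Icc 1 n} ≤ t) :
    #G ≤ 2 * t + 1 := by
  classical
  set D := (G ×ˢ G).filter fun x => (x.2 - x.1).val ∈ Icc 1 n
  have hD : #D ≤ #G * t := by
    calc #D = ∑ p ∈ G, #{k ∈ G | (k - p).val ∈ Icc 1 n} := by
          simp only [D, card_filter, sum_product]
      _ ≤ #G * t := by simpa using sum_le_card_nsmul G _ t hG
  -- Of two distinct points of a cycle of length `N ≤ 2n`, one follows the other within distance `n`.
  have hcover : G.offDiag ⊆ D ∪ D.image Prod.swap := by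
    rintro ⟨p, k⟩ hpk
    obtain ⟨hp, hk, hne⟩ := mem_offDiag.1 hpk
    have hkp : k - p ≠ 0 := sub_ne_zero.2 (Ne.symm hne)
    have hpos : 0 < (k - p).val := Nat.pos_of_ne_zero ((ZMod.val_ne_zero _).2 hkp)
    by_cases hle : (k - p).val ≤ n
    · exact mem_union_left _ (mem_filter.2 ⟨mem_product.2 ⟨hp, hk⟩, mem_Icc.2 ⟨hpos, hle⟩⟩)
    · have hval : (p - k).val = N - (k - p).val := by
        rw [← neg_sub, ZMod.neg_val, if_neg hkp]
      have hlt := ZMod.val_lt (k - p)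
      have hkpD : (k, p) ∈ D :=
        mem_filter.2 ⟨mem_product.2 ⟨hk, hp⟩, by rw [mem_Icc, hval]; omega⟩
      exact mem_union_right _ (mem_image.2 ⟨(k, p), hkpD, rfl⟩)
  have hoff : #G * #G - #G ≤ 2 * (#G * t) := by
    calc #G * #G - #G = #G.offDiag := (offDiag_card G).symm
      _ ≤ #D + #(D.image Prod.swap) := (card_le_card hcover).trans (card_union_le _ _)
      _ ≤ #D + #D := Nat.add_le_add_left card_image_le _
      _ ≤ 2 * (#G * t) := by omega
  rcases Nat.eq_zero_or_pos #G with h | h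
  · omega
  · have : #G * (#G - 1) ≤ #G * (2 * t) := by
      rw [Nat.mul_sub_one]; linarith
    have := Nat.le_of_mul_le_mul_left this h
    omega

def cyclicWindow {N : ℕ} (z : ZMod N → Ω) (p : ZMod N) : Fin n → Ω :=
  fun i => z (p + (i : ℕ))

def cyclicWindowPair {N : ℕ} (z : ZMod N → Ω) (p : ZMod N) : (Fin n → Ω) × (Fin n → Ω) :=
  (cyclicWindow z p, cyclicWindow z (p + n))

theorem cyclicWindowPair_injective [NeZero n] (p : ZMod (2 * n)) :
    Function.Injective fun z : ZMod (2 * n) → Ω => cyclicWindowPair (n := n) z p := by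
  intro z z' h
  obtain ⟨h₁, h₂⟩ := Prod.mk.inj h
  funext x
  have hx := ZMod.val_lt (x - p)
  by_cases hm : (x - p).val < n
  · have := congrFun h₁ ⟨_, hm⟩
    simpa [cyclicWindow, ZMod.natCast_zmod_val] using this
  · have := congrFun h₂ ⟨(x - p).val - n, by omega⟩
    simpa [cyclicWindow, Nat.cast_sub (not_lt.1 hm), ZMod.natCast_zmod_val] using this

theorem cyclicWindowPair_bijective [Fintype Ω] [NeZero n] (p : ZMod (2 * n)) :
    Function.Bijective fun z : ZMod (2 * n) → Ω => cyclicWindowPair (n := n) z p :=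
  (Fintype.bijective_iff_injective_and_card _).2 ⟨cyclicWindowPair_injective p, by
    simp [ZMod.card, two_mul, pow_add]⟩

theorem card_filter_cyclicWindow_mem_le_coverCount {N : ℕ} [NeZero N] (A : Set (Fin n → Ω))
    (z : ZMod N → Ω) (p : ZMod N)
    [DecidablePred fun k => cyclicWindow z k ∈ A ∧ (k - p).val ∈ Icc 1 n] :
    #{k | cyclicWindow z k ∈ A ∧ (k - p).val ∈ Icc 1 n} ≤
      coverCount A (cyclicWindow z (p + n)) := by
  rw [coverCount, Nat.card_coe_set_eq, ← Set.ncard_coe_finset]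
  -- the window at `k` overlaps the window at `p + n` with shift `n - (k - p)`
  refine Set.ncard_le_ncard_of_injOn (fun k => n - (k - p).val) ?_ ?_
    ((Set.finite_Iio n).subset fun j hj => hj.1)
  · intro k hk
    simp only [coe_filter, mem_univ, true_and, Set.mem_ofPred_eq, mem_Icc] at hk
    obtain ⟨hA, h1, hn⟩ := hk
    refine ⟨by omega, _, hA, fun i hi => ?_⟩
    simp only [cyclicWindow, Nat.cast_add, Nat.cast_sub hn, ZMod.natCast_zmod_val]
    congr 1
    ring
  · intro k hk k' hk' h
    simp only [coe_filter, mem_univ, true_and, Set.mem_ofPred_eq, mem_Icc] at hk hk'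
    have : (k - p).val = (k' - p).val := by simp only at h; omega
    simpa using ZMod.val_injective _ this

theorem two_mul_mul_card_mul_card_le [Fintype Ω] [NeZero n] (A : Set (Fin n → Ω)) (t : ℕ) :
    2 * n * (Nat.card A * Nat.card {u | coverCount A u ≤ t}) ≤
      (2 * t + 1) * Fintype.card Ω ^ (2 * n) := by
  classical
  set U := {u | coverCount A u ≤ t}
  have hfiber (p : ZMod (2 * n)) :
      #{z | cyclicWindowPair z p ∈ A ×ˢ U} = Nat.card A * Nat.card U := by
    rw [card_equiv (Equiv.ofBijective _ (cyclicWindowPair_bijective p))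
      (t := A.toFinset ×ˢ U.toFinset) (by simp), card_product, Nat.card_eq_card_toFinset A,
      Nat.card_eq_card_toFinset U]
  have hmarked (z : ZMod (2 * n) → Ω) : #{p | cyclicWindowPair z p ∈ A ×ˢ U} ≤ 2 * t + 1 := by
    refine card_le_of_card_filter_val_mem_Icc_le le_rfl _ fun p hp => ?_
    obtain ⟨-, hpU⟩ := (mem_filter.1 hp).2
    calc #{k ∈ {p | cyclicWindowPair z p ∈ A ×ˢ U} | (k - p).val ∈ Icc 1 n}
        ≤ #{k | cyclicWindow z k ∈ A ∧ (k - p).val ∈ Icc 1 n} := by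
          refine card_le_card fun k hk => ?_
          simp only [mem_filter, mem_univ, true_and] at hk ⊢
          exact ⟨hk.1.1, hk.2⟩
      _ ≤ coverCount A (cyclicWindow z (p + n)) :=
          card_filter_cyclicWindow_mem_le_coverCount A z p
      _ ≤ t := hpU
  calc 2 * n * (Nat.card A * Nat.card U)
      = ∑ p : ZMod (2 * n), #{z | cyclicWindowPair z p ∈ A ×ˢ U} := by
        rw [sum_congr rfl fun p _ => hfiber p, sum_const, card_univ, ZMod.card, smul_eq_mul]
    _ = ∑ z : ZMod (2 * n) → Ω, #{p | cyclicWindowPair z p ∈ A ×ˢ U} := by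
        simp only [card_filter]; exact sum_comm
    _ ≤ ∑ _z : ZMod (2 * n) → Ω, (2 * t + 1) := sum_le_sum fun z _ => hmarked z
    _ = (2 * t + 1) * Fintype.card Ω ^ (2 * n) := by simp [ZMod.card, mul_comm]

theorem meas_mono [Fintype Ω] {S T : Set (Fin n → Ω)} (h : S ⊆ T) : meas S ≤ meas T := by
  unfold meas; gcongr; exact Nat.card_mono (Set.toFinite T) h

theorem meas_add_meas_compl [Fintype Ω] (hq : (Fintype.card Ω : ℝ) ^ n ≠ 0)
    (S : Set (Fin n → Ω)) : meas S + meas Sᶜ = 1 := by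
  rw [meas, meas, ← add_div, div_eq_one_iff_eq hq, Nat.card_coe_set_eq, Nat.card_coe_set_eq]
  exact_mod_cast (Set.ncard_add_ncard_compl S).trans (by simp)

theorem two_mul_mul_meas_mul_meas_le [Fintype Ω] [NeZero n] (A : Set (Fin n → Ω)) (t : ℕ) :
    2 * n * meas A * meas {u | coverCount A u ≤ t} ≤ 2 * t + 1 := by
  rcases eq_or_ne ((Fintype.card Ω : ℝ) ^ n) 0 with hq | hq
  · simp only [meas, hq, div_zero, mul_zero]; positivity
  · have key : (2 * n * (Nat.card A * Nat.card {u | coverCount A u ≤ t}) : ℝ) ≤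
        (2 * t + 1) * ((Fintype.card Ω : ℝ) ^ n) ^ 2 := by
      rw [← pow_mul, mul_comm n 2]; exact_mod_cast two_mul_mul_card_mul_card_le A t
    calc 2 * n * meas A * meas {u | coverCount A u ≤ t}
        = (2 * n * (Nat.card A * Nat.card {u | coverCount A u ≤ t}) : ℝ) /
            ((Fintype.card Ω : ℝ) ^ n) ^ 2 := by rw [meas, meas]; ring
      _ ≤ 2 * t + 1 := (div_le_iff₀ (by positivity)).2 key

end

theorem stmt16_general {Ω : Type*} [Fintype Ω] {n : ℕ}
    (A : Set (Fin n → Ω)) (α : ℝ) (hα : meas A = α)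
    (hα8 : 8 ≤ α * n) :
    meas {w : Fin n → Ω |
        α * n / 8 ≤ (Nat.card {j : ℕ | j < n ∧ w ∈ covers A j} : ℝ)}
      ≥ 1 / 2 := by
  have : NeZero n := ⟨by rintro rfl; norm_num at hα8⟩
  have hq : (Fintype.card Ω : ℝ) ^ n ≠ 0 := fun hq => by
    simp only [meas, hq, div_zero] at hα; subst hα; norm_num at hα8
  let S := {w : Fin n → Ω | α * n / 8 ≤ (coverCount A w : ℝ)}
  change meas S ≥ 1 / 2
  set t := ⌊α * n / 8⌋₊
  have hSc : Sᶜ ⊆ {u | coverCount A u ≤ t} :=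
    fun w (hw : ¬ α * n / 8 ≤ (coverCount A w : ℝ)) => Nat.le_floor (not_le.1 hw).le
  have ht : (t : ℝ) ≤ α * n / 8 := Nat.floor_le (by positivity)
  have hlevel := two_mul_mul_meas_mul_meas_le A t
  have hU : meas {u | coverCount A u ≤ t} ≤ 1 / 2 := by
    rw [hα] at hlevel; nlinarith
  linarith [meas_add_meas_compl hq S, meas_mono hSc]

theorem stmt16 {Ω : Type*} [Fintype Ω] [Nonempty Ω] {n : ℕ} (hn : 1 ≤ n)
    (A : Set (Fin n → Ω)) (α : ℝ) (hα : meas A = α)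
    (hα1 : 1 / (n : ℝ) ≤ α) (hα8 : 8 ≤ α * n) :
    meas {w : Fin n → Ω |
        α * n / 8 ≤ (Nat.card {j : ℕ | j < n ∧ w ∈ covers A j} : ℝ)}
      ≥ 1 / 2 :=
  stmt16_general A α hα hα8
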